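/- Let γ ≤ 1/L_f and let (y_t, z_t, x_t) be the iterates of dense VR-TOS, with dual iterate u_t = (y_t − z_t)/γ. Then for any (x, u) ∈ dom(g) × dom(h*), setting y = x + γu, and for any η > 0, with E the conditional expectation at iteration t and x* a minimizer of the primal objective: 2γ·E[L(x_t, u) − L(x, u_t)] + E‖y_{t+1} − y‖² ≤ ‖y_t − y‖² + 2γ²(1 + η)·E‖∇f_i(z_t) − ∇f_i(x*)‖² + 4γ²(1 + η⁻¹)·L_f·H_t, where f_i = ψ_i + ω. -/

import Mathlib

open Finset
open scoped RealInnerProductSpace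

noncomputable section

variable {p : ℕ}

/-- proper, lower semicontinuous, convex extended-real function. -/
structure ProperLscConvex (g : EuclideanSpace ℝ (Fin p) → EReal) : Prop where
  proper : ∃ x, g x ≠ ⊤
  ne_bot : ∀ x, g x ≠ ⊥
  lsc : LowerSemicontinuous g
  convex : ∀ x y : EuclideanSpace ℝ (Fin p), ∀ a b : ℝ, 0 ≤ a → 0 ≤ b → a + b = 1 →
    g (a • x + b • y) ≤ (a : EReal) * g x + (b : EReal) * g y

/-- The Bregman divergence of a differentiable convex function. -/
def bregman (f : EuclideanSpace ℝ (Fin p) → ℝ)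
    (gradf : EuclideanSpace ℝ (Fin p) → EuclideanSpace ℝ (Fin p))
    (x y : EuclideanSpace ℝ (Fin p)) : ℝ :=
  f x - f y - ⟪gradf y, x - y⟫

/-- `z = prox_{γ g}(x)`. -/
def IsProx (γ : ℝ) (g : EuclideanSpace ℝ (Fin p) → EReal) (x z : EuclideanSpace ℝ (Fin p)) : Prop :=
  ∀ w, g z + (((1 / (2 * γ)) * ‖x - z‖ ^ 2 : ℝ) : EReal)
      ≤ g w + (((1 / (2 * γ)) * ‖x - w‖ ^ 2 : ℝ) : EReal)

/-- Fenchel conjugate. -/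
def fconj (g : EuclideanSpace ℝ (Fin p) → EReal) (u : EuclideanSpace ℝ (Fin p)) : EReal :=
  ⨆ x, ((⟪x, u⟫ : ℝ) : EReal) - g x

/-- The Lagrangian `L(x, u) = f(x) + g(x) + ⟨x, u⟩ − h*(u)`. -/
def Lagr (f : EuclideanSpace ℝ (Fin p) → ℝ) (g h : EuclideanSpace ℝ (Fin p) → EReal)
    (x u : EuclideanSpace ℝ (Fin p)) : EReal :=
  ((f x : ℝ) : EReal) + g x + ((⟪x, u⟫ : ℝ) : EReal) - fconj h u

/-!
Let `u_t = (y - z) / γ` with `z = prox_{γh}(y)`; it is a subgradient of `h` at `z`, so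
`h*(u_t) = ⟪z, u_t⟫ - h z`. For one step with an arbitrary gradient estimate `v`, the descent
lemma and convexity of `f`, the prox inequality for `g` at the new point `x_t`, and Fenchel–Young
for `h*` at the test point `u` bound the Lagrangian gap, and an exact polarization identity turns
this into
`2γ (L(x_t, u) - L(x, u_t)) + ‖y_{t+1} - (x + γu)‖²`
`  ≤ ‖y_t - (x + γu)‖² + 2γ ⟪∇f(z) - v, x_t - x⟫ + (γL_f - 1) ‖x_t - z‖²`.
The prox is nonexpansive, so replacing `x_t` by the prox point computed from the exact gradient
costs at most `2γ² ‖∇f(z) - v‖²`; what remains is linear in `∇f(z) - v` and averages to zero over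
the sampled index. The variance of the estimator is at most the second moment of
`∇f_i(z) - ∇f_i(x⋆) + (∇ψ_i(x⋆) - α_i)`, which Young's inequality splits with weight `η`, and
cocoercivity of `∇ψ_j` bounds each memory term `‖∇ψ_j(x⋆) - α_j‖²` by `2 L_f m_j`.
-/

open Filter Topology

theorem EReal.coe_finset_sum {ι : Type*} (s : Finset ι) (f : ι → ℝ) :
    ((∑ i ∈ s, f i : ℝ) : EReal) = ∑ i ∈ s, (f i : EReal) :=
  map_sum (⟨⟨((↑) : ℝ → EReal), EReal.coe_zero⟩, EReal.coe_add⟩ : ℝ →+ EReal) f s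

theorem ConvexOn.fun_sum {E ι : Type*} [AddCommGroup E] [Module ℝ E] {s : Set E}
    (hs : Convex ℝ s) (t : Finset ι) {f : ι → E → ℝ} (hf : ∀ i ∈ t, ConvexOn ℝ s (f i)) :
    ConvexOn ℝ s (fun w => ∑ i ∈ t, f i w) := by
  classical
  induction t using Finset.induction_on with
  | empty => simpa using convexOn_const (0 : ℝ) hs
  | insert i t hi ih =>
    simp only [Finset.sum_insert hi]
    exact (hf i (mem_insert_self i t)).add (ih fun j hj => hf j (mem_insert_of_mem hj))

section Smooth

variable {E : Type*} [NormedAddCommGroup E] [InnerProductSpace ℝ E] [CompleteSpace E]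

theorem HasGradientAt.add {f g : E → ℝ} {f' g' x : E} (hf : HasGradientAt f f' x)
    (hg : HasGradientAt g g' x) : HasGradientAt (fun w => f w + g w) (f' + g') x := by
  rw [hasGradientAt_iff_hasFDerivAt, map_add]
  exact hf.hasFDerivAt.add hg.hasFDerivAt

theorem HasGradientAt.sub {f g : E → ℝ} {f' g' x : E} (hf : HasGradientAt f f' x)
    (hg : HasGradientAt g g' x) : HasGradientAt (fun w => f w - g w) (f' - g') x := by
  rw [hasGradientAt_iff_hasFDerivAt, map_sub]
  exact hf.hasFDerivAt.sub hg.hasFDerivAt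

theorem HasGradientAt.const_mul {f : E → ℝ} {f' x : E} (hf : HasGradientAt f f' x) (c : ℝ) :
    HasGradientAt (fun w => c * f w) (c • f') x := by
  rw [hasGradientAt_iff_hasFDerivAt, map_smul]
  exact hf.hasFDerivAt.const_mul c

theorem HasGradientAt.sum {ι : Type*} (t : Finset ι) {f : ι → E → ℝ} {f' : ι → E} {x : E}
    (hf : ∀ i ∈ t, HasGradientAt (f i) (f' i) x) :
    HasGradientAt (fun w => ∑ i ∈ t, f i w) (∑ i ∈ t, f' i) x := by
  rw [hasGradientAt_iff_hasFDerivAt, map_sum]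
  exact HasFDerivAt.fun_sum fun i hi => (hf i hi).hasFDerivAt

theorem hasGradientAt_inner_left (c x : E) : HasGradientAt (fun w => ⟪c, w⟫) c x :=
  (InnerProductSpace.toDual ℝ E c).hasFDerivAt

theorem HasGradientAt.hasDerivAt_lineMap {f : E → ℝ} {f' x y : E} (t : ℝ)
    (hf : HasGradientAt f f' (AffineMap.lineMap x y t)) :
    HasDerivAt (fun s : ℝ => f (AffineMap.lineMap x y s)) ⟪f', y - x⟫ t := by
  have hline : HasDerivAt (fun s : ℝ => AffineMap.lineMap x y s) (y - x) t := by
    simpa [AffineMap.lineMap_apply_module'] using ((hasDerivAt_id t).smul_const (y - x)).add_const x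
  exact hf.hasFDerivAt.comp_hasDerivAt t hline

theorem ConvexOn.add_inner_gradient_le {f : E → ℝ} {f' x : E} (hconv : ConvexOn ℝ Set.univ f)
    (hf : HasGradientAt f f' x) (y : E) : f x + ⟪f', y - x⟫ ≤ f y := by
  have hline : ConvexOn ℝ Set.univ (fun s : ℝ => f (AffineMap.lineMap x y s)) :=
    hconv.comp_affineMap (AffineMap.lineMap x y)
  have hderiv := HasGradientAt.hasDerivAt_lineMap (y := y) 0 (by simpa using hf)
  have hslope : ⟪f', y - x⟫ ≤ f y - f x := by
    simpa [slope_def_field] using hline.le_slope_of_hasDerivAt trivial trivial zero_lt_one hderiv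
  linarith

variable {f : E → ℝ} {gradf : E → E} {L : ℝ}

theorem le_add_inner_add_sq_of_lipschitz_gradient (hf : ∀ x, HasGradientAt f (gradf x) x)
    (hlip : ∀ a b, ‖gradf a - gradf b‖ ≤ L * ‖a - b‖) (x y : E) :
    f y ≤ f x + ⟪gradf x, y - x⟫ + L / 2 * ‖y - x‖ ^ 2 := by
  set φ : ℝ → ℝ := fun t =>
    f (AffineMap.lineMap x y t) - t * ⟪gradf x, y - x⟫ - L / 2 * t ^ 2 * ‖y - x‖ ^ 2
  have hφ : ∀ t, HasDerivAt φ
      (⟪gradf (AffineMap.lineMap x y t) - gradf x, y - x⟫ - L * t * ‖y - x‖ ^ 2) t := by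
    intro t
    have hsq := ((hasDerivAt_pow 2 t).const_mul (L / 2)).mul_const (‖y - x‖ ^ 2)
    refine ((((hf _).hasDerivAt_lineMap t).sub ((hasDerivAt_id t).mul_const _)).sub
      hsq).congr_deriv ?_
    rw [inner_sub_left]
    push_cast
    ring
  have hanti : AntitoneOn φ (Set.Icc 0 1) := by
    refine antitoneOn_of_hasDerivWithinAt_nonpos (convex_Icc 0 1)
      (fun t _ => (hφ t).continuousAt.continuousWithinAt)
      (fun t _ => (hφ t).hasDerivWithinAt) fun t ht => ?_
    rw [interior_Icc] at ht
    have hgrad : ‖gradf (AffineMap.lineMap x y t) - gradf x‖ ≤ L * (t * ‖y - x‖) := by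
      simpa [AffineMap.lineMap_apply_module', norm_smul, abs_of_pos ht.1] using
        hlip (AffineMap.lineMap x y t) x
    nlinarith [real_inner_le_norm (gradf (AffineMap.lineMap x y t) - gradf x) (y - x),
      mul_le_mul_of_nonneg_right hgrad (norm_nonneg (y - x))]
  have h01 := hanti (Set.left_mem_Icc.2 zero_le_one) (Set.right_mem_Icc.2 zero_le_one) zero_le_one
  simp only [φ, AffineMap.lineMap_apply_zero, AffineMap.lineMap_apply_one] at h01
  linarith

theorem ConvexOn.sub_le_inner_gradient_add_sq (hconv : ConvexOn ℝ Set.univ f)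
    (hf : ∀ x, HasGradientAt f (gradf x) x) (hlip : ∀ a b, ‖gradf a - gradf b‖ ≤ L * ‖a - b‖)
    (x x' z : E) : f x - f x' ≤ ⟪gradf z, x - x'⟫ + L / 2 * ‖x - z‖ ^ 2 := by
  have hupper := le_add_inner_add_sq_of_lipschitz_gradient hf hlip z x
  have hlower := hconv.add_inner_gradient_le (hf z) x'
  have hsplit : ⟪gradf z, x - x'⟫ = ⟪gradf z, x - z⟫ - ⟪gradf z, x' - z⟫ := by
    rw [← inner_sub_right, sub_sub_sub_cancel_right]
  linarith

/-- Apply the descent lemma to `f - ⟪∇f b, ·⟫`, which is minimal at `b`, along the gradient step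
from `a`. -/
theorem ConvexOn.norm_gradient_sub_sq_le (hL : 0 ≤ L) (hconv : ConvexOn ℝ Set.univ f)
    (hf : ∀ x, HasGradientAt f (gradf x) x) (hlip : ∀ a b, ‖gradf a - gradf b‖ ≤ L * ‖a - b‖)
    (a b : E) : ‖gradf a - gradf b‖ ^ 2 ≤ 2 * L * (f a - f b - ⟪gradf b, a - b⟫) := by
  rcases hL.eq_or_lt with rfl | hL
  · have hconst : ‖gradf a - gradf b‖ = 0 := by
      simpa using (hlip a b).antisymm (by simp)
    simp [hconst]
  set d := gradf a - gradf b
  set a' := a - L⁻¹ • d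
  have hdesc := le_add_inner_add_sq_of_lipschitz_gradient
    (f := fun w => f w - ⟪gradf b, w⟫) (gradf := fun w => gradf w - gradf b)
    (fun x => (hf x).sub (hasGradientAt_inner_left _ x))
    (fun x y => by simpa only [sub_sub_sub_cancel_right] using hlip x y) a a'
  have hmin := hconv.add_inner_gradient_le (hf b) a'
  have hstep : a' - a = -(L⁻¹ • d) := sub_sub_cancel_left a _
  simp only [hstep, inner_neg_right, real_inner_smul_right, norm_neg, norm_smul,
    Real.norm_of_nonneg (inv_nonneg.2 hL.le), inner_sub_right] at hdesc hmin
  have hdd : ⟪gradf a - gradf b, d⟫ = ‖d‖ ^ 2 := real_inner_self_eq_norm_sq d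
  have hsq : L / 2 * (L⁻¹ * ‖d‖) ^ 2 = L⁻¹ / 2 * ‖d‖ ^ 2 := by field_simp
  have hgap : L⁻¹ / 2 * ‖d‖ ^ 2 ≤ f a - f b - ⟪gradf b, a - b⟫ := by
    rw [hdd, hsq] at hdesc
    rw [inner_sub_right]
    linarith
  calc ‖d‖ ^ 2 = 2 * L * (L⁻¹ / 2 * ‖d‖ ^ 2) := by field_simp
    _ ≤ _ := by gcongr

end Smooth

theorem norm_gradient_sub_sq_le_bregman_add {ψ ω : EuclideanSpace ℝ (Fin p) → ℝ}
    {gradψ gradω : EuclideanSpace ℝ (Fin p) → EuclideanSpace ℝ (Fin p)} {Lψ Lω : ℝ}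
    (hψconv : ConvexOn ℝ Set.univ ψ) (hψ : ∀ x, HasGradientAt ψ (gradψ x) x)
    (hψlip : ∀ a b, ‖gradψ a - gradψ b‖ ≤ Lψ * ‖a - b‖)
    (hωconv : ConvexOn ℝ Set.univ ω) (hω : ∀ x, HasGradientAt ω (gradω x) x)
    (hωlip : ∀ a b, ‖gradω a - gradω b‖ ≤ Lω * ‖a - b‖) (φ xs : EuclideanSpace ℝ (Fin p)) :
    ‖gradψ φ - gradψ xs‖ ^ 2
      ≤ 2 * (Lψ + Lω) * bregman (fun x => ψ x + ω x) (fun x => gradψ x + gradω x) φ xs := by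
  rcases eq_or_ne φ xs with rfl | hne
  · simp [bregman]
  have hdist : 0 < ‖φ - xs‖ := norm_pos_iff.2 (sub_ne_zero.2 hne)
  have hLψ : 0 ≤ Lψ := nonneg_of_mul_nonneg_left ((norm_nonneg _).trans (hψlip φ xs)) hdist
  have hLω : 0 ≤ Lω := nonneg_of_mul_nonneg_left ((norm_nonneg _).trans (hωlip φ xs)) hdist
  have hcoco := hψconv.norm_gradient_sub_sq_le hLψ hψ hψlip φ xs
  have hBψ := hψconv.add_inner_gradient_le (hψ xs) φ
  have hBω := hωconv.add_inner_gradient_le (hω xs) φ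
  rw [bregman, inner_add_left]
  nlinarith [mul_nonneg hLψ (sub_nonneg.2 hBω), mul_nonneg hLω (sub_nonneg.2 hBψ),
    mul_nonneg hLω (sub_nonneg.2 hBω)]

theorem norm_gradient_sub_sq_le_of_memory {ψ ω fj : EuclideanSpace ℝ (Fin p) → ℝ}
    {gradψ gradω gradfj : EuclideanSpace ℝ (Fin p) → EuclideanSpace ℝ (Fin p)} {Lψ Lω : ℝ}
    (hψconv : ConvexOn ℝ Set.univ ψ) (hψ : ∀ x, HasGradientAt ψ (gradψ x) x)
    (hψlip : ∀ a b, ‖gradψ a - gradψ b‖ ≤ Lψ * ‖a - b‖)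
    (hωconv : ConvexOn ℝ Set.univ ω) (hω : ∀ x, HasGradientAt ω (gradω x) x)
    (hωlip : ∀ a b, ‖gradω a - gradω b‖ ≤ Lω * ‖a - b‖)
    (hfj : ∀ x, fj x = ψ x + ω x) (hgradfj : ∀ x, gradfj x = gradψ x + gradω x)
    (hL : 0 < Lψ + Lω) {α xs : EuclideanSpace ℝ (Fin p)} {m : ℝ}
    (hm : m = 1 / (2 * (Lψ + Lω)) * ‖α - gradψ xs‖ ^ 2 ∨
      ∃ φ, α = gradψ φ ∧ m = bregman fj gradfj φ xs) :
    ‖gradψ xs - α‖ ^ 2 ≤ 2 * (Lψ + Lω) * m := by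
  rw [norm_sub_rev]
  rcases hm with rfl | ⟨φ, rfl, rfl⟩
  · exact le_of_eq (by field_simp)
  · rw [show fj = _ from funext hfj, show gradfj = _ from funext hgradfj]
    exact norm_gradient_sub_sq_le_bregman_add hψconv hψ hψlip hωconv hω hωlip φ xs

theorem norm_add_sq_le_one_add_mul {E : Type*} [SeminormedAddCommGroup E] (a b : E) {η : ℝ}
    (hη : 0 < η) : ‖a + b‖ ^ 2 ≤ (1 + η) * ‖a‖ ^ 2 + (1 + η⁻¹) * ‖b‖ ^ 2 := by
  have hamgm : 2 * (‖a‖ * ‖b‖) ≤ η * ‖a‖ ^ 2 + η⁻¹ * ‖b‖ ^ 2 := by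
    have := mul_nonneg (inv_pos.2 hη).le (sq_nonneg (η * ‖a‖ - ‖b‖))
    field_simp at this ⊢
    nlinarith [this]
  nlinarith [norm_add_le a b, norm_nonneg (a + b), norm_nonneg a, norm_nonneg b]

section Averages

variable {E : Type*} [NormedAddCommGroup E] [InnerProductSpace ℝ E] {n : ℕ}

theorem sum_norm_sub_average_sq_le {ι : Type*} (s : Finset ι) (w : ι → E) :
    ∑ i ∈ s, ‖w i - (#s : ℝ)⁻¹ • ∑ j ∈ s, w j‖ ^ 2 ≤ ∑ i ∈ s, ‖w i‖ ^ 2 := by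
  set m := (#s : ℝ)⁻¹ • ∑ j ∈ s, w j
  have hm : ∑ j ∈ s, w j = (#s : ℝ) • m := by
    rcases s.eq_empty_or_nonempty with rfl | hs
    · simp
    · rw [smul_smul, mul_inv_cancel₀ (by exact_mod_cast hs.card_ne_zero), one_smul]
  have hinner : ∑ i ∈ s, ⟪w i, m⟫ = (#s : ℝ) * ‖m‖ ^ 2 := by
    rw [← sum_inner, hm, real_inner_smul_left, real_inner_self_eq_norm_sq]
  have hexpand : ∑ i ∈ s, ‖w i - m‖ ^ 2 = ∑ i ∈ s, ‖w i‖ ^ 2 - (#s : ℝ) * ‖m‖ ^ 2 := by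
    simp only [norm_sub_sq_real, sum_add_distrib, sum_sub_distrib, ← mul_sum, hinner, sum_const,
      nsmul_eq_mul]
    ring
  rw [hexpand]
  nlinarith [sq_nonneg ‖m‖, (#s).cast_nonneg (α := ℝ)]

theorem norm_average_add_sub_le (hn : 0 < n) {F : Fin n → E → E} {G : E → E} {K K' : ℝ}
    (hF : ∀ j a b, ‖F j a - F j b‖ ≤ K * ‖a - b‖) (hG : ∀ a b, ‖G a - G b‖ ≤ K' * ‖a - b‖)
    (a b : E) :
    ‖((n : ℝ)⁻¹ • ∑ j, F j a + G a) - ((n : ℝ)⁻¹ • ∑ j, F j b + G b)‖ ≤ (K + K') * ‖a - b‖ := by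
  have hnR : (0 : ℝ) < n := by exact_mod_cast hn
  have hsum : ‖∑ j, (F j a - F j b)‖ ≤ n * (K * ‖a - b‖) := by
    simpa using (norm_sum_le univ _).trans (sum_le_sum fun j _ => hF j a b)
  calc ‖((n : ℝ)⁻¹ • ∑ j, F j a + G a) - ((n : ℝ)⁻¹ • ∑ j, F j b + G b)‖
      = ‖(n : ℝ)⁻¹ • ∑ j, (F j a - F j b) + (G a - G b)‖ := by
        rw [sum_sub_distrib, smul_sub]; congr 1; abel
    _ ≤ (n : ℝ)⁻¹ * (n * (K * ‖a - b‖)) + K' * ‖a - b‖ := by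
        grw [norm_add_le, norm_smul, Real.norm_of_nonneg (inv_nonneg.2 hnR.le), hsum, hG a b]
    _ = (K + K') * ‖a - b‖ := by field_simp

theorem inv_mul_sum_le_of_le_add_inner (hn : 0 < n) {A B : Fin n → ℝ} {e : Fin n → E} {R : ℝ}
    {c : E} (he : ∑ i, e i = 0) (h : ∀ i, A i ≤ R + B i + ⟪e i, c⟫) :
    (n : ℝ)⁻¹ * ∑ i, A i ≤ R + (n : ℝ)⁻¹ * ∑ i, B i := by
  have hnR : (0 : ℝ) < n := by exact_mod_cast hn
  have hsum : ∑ i, A i ≤ n * R + ∑ i, B i := by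
    simpa [sum_add_distrib, ← sum_inner, he] using sum_le_sum fun i (_ : i ∈ univ) => h i
  calc (n : ℝ)⁻¹ * ∑ i, A i ≤ (n : ℝ)⁻¹ * (n * R + ∑ i, B i) := by gcongr
    _ = R + (n : ℝ)⁻¹ * ∑ i, B i := by field_simp

variable (G G' α : Fin n → E) (c c' : E)

theorem sum_saga_error_eq_zero (hn : 0 < n) :
    ∑ i, (((n : ℝ)⁻¹ • ∑ j, G j + c) - (G i - α i + (n : ℝ)⁻¹ • ∑ j, α j + c)) = 0 := by
  have hnR : (n : ℝ) ≠ 0 := by exact_mod_cast hn.ne'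
  simp only [sum_sub_distrib, sum_add_distrib, sum_const, card_univ, Fintype.card_fin,
    ← Nat.cast_smul_eq_nsmul ℝ, smul_smul, mul_inv_cancel₀ hnR, one_smul]
  abel

/-- The error at index `i` is `w̄ - w i` for `w i = (G i + c - (G' i + c')) + (G' i - α i)`, so its
second moment is at most that of `w`, which Young's inequality splits. -/
theorem sum_norm_saga_error_sq_le (hn : 0 < n) {η : ℝ} (hη : 0 < η) :
    ∑ i, ‖((n : ℝ)⁻¹ • ∑ j, G j + c) - (G i - α i + (n : ℝ)⁻¹ • ∑ j, α j + c)‖ ^ 2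
      ≤ (1 + η) * ∑ i, ‖(G i + c) - (G' i + c')‖ ^ 2 + (1 + η⁻¹) * ∑ i, ‖G' i - α i‖ ^ 2 := by
  have hnR : (n : ℝ) ≠ 0 := by exact_mod_cast hn.ne'
  set w : Fin n → E := fun i => ((G i + c) - (G' i + c')) + (G' i - α i)
  have herror : ∀ i, ((n : ℝ)⁻¹ • ∑ j, G j + c) - (G i - α i + (n : ℝ)⁻¹ • ∑ j, α j + c)
      = -(w i - (n : ℝ)⁻¹ • ∑ j, w j) := by
    intro i
    simp only [w, sum_add_distrib, sum_sub_distrib, sum_const, card_univ, Fintype.card_fin,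
      ← Nat.cast_smul_eq_nsmul ℝ, smul_add, smul_sub, smul_smul, inv_mul_cancel₀ hnR, one_smul]
    abel
  have hvar := sum_norm_sub_average_sq_le univ w
  simp only [card_univ, Fintype.card_fin] at hvar
  simp only [herror, norm_neg]
  refine hvar.trans ?_
  rw [mul_sum, mul_sum, ← sum_add_distrib]
  exact sum_le_sum fun i _ => norm_add_sq_le_one_add_mul _ _ hη

end Averages

section Prox

variable {g : EuclideanSpace ℝ (Fin p) → EReal} {γ r : ℝ}
  {a b w x y z z' : EuclideanSpace ℝ (Fin p)}

theorem ProperLscConvex.exists_eq_coe (hg : ProperLscConvex g) (hx : g x ≠ ⊤) :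
    ∃ r : ℝ, g x = r :=
  ⟨(g x).toReal, (EReal.coe_toReal hx (hg.ne_bot x)).symm⟩

theorem IsProx.ne_top (hg : ProperLscConvex g) (hprox : IsProx γ g a z) : g z ≠ ⊤ := by
  obtain ⟨x₀, hx₀⟩ := hg.proper
  intro htop
  have h := hprox x₀
  rw [htop, EReal.top_add_of_ne_bot (EReal.coe_ne_bot _), top_le_iff] at h
  exact EReal.add_lt_top hx₀ (EReal.coe_ne_top _) |>.ne h

/-- `(a - z) / γ` is a subgradient of `g` at `z`: test the prox inequality along the segment from
`z` to `w` and let the step tend to `0`. -/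
theorem IsProx.inner_sub_le (hγ : 0 < γ) (hg : ProperLscConvex g) (hprox : IsProx γ g a z)
    {gz gw : ℝ} (hz : g z = gz) (hw : g w = gw) :
    ⟪a - z, w - z⟫ ≤ γ * (gw - gz) := by
  have hsegment : ∀ t : ℝ, 0 < t → t ≤ 1 →
      0 ≤ γ * (gw - gz) - ⟪a - z, w - z⟫ + t * (‖w - z‖ ^ 2 / 2) := by
    intro t ht0 ht1
    have hconv := hg.convex z w (1 - t) t (by linarith) ht0.le (by ring)
    rw [hz, hw, ← EReal.coe_mul, ← EReal.coe_mul, ← EReal.coe_add] at hconv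
    have hprox_t := (hprox ((1 - t) • z + t • w)).trans (add_le_add_left hconv _)
    rw [hz, ← EReal.coe_add, ← EReal.coe_add, EReal.coe_le_coe_iff] at hprox_t
    have hnorm : ‖a - ((1 - t) • z + t • w)‖ ^ 2
        = ‖a - z‖ ^ 2 - 2 * t * ⟪a - z, w - z⟫ + t ^ 2 * ‖w - z‖ ^ 2 := by
      rw [show a - ((1 - t) • z + t • w) = (a - z) - t • (w - z) by module, norm_sub_sq_real,
        real_inner_smul_right, norm_smul, Real.norm_eq_abs, abs_of_pos ht0]
      ring
    rw [hnorm] at hprox_t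
    field_simp at hprox_t
    nlinarith
  have hlim : Tendsto (fun t : ℝ => γ * (gw - gz) - ⟪a - z, w - z⟫ + t * (‖w - z‖ ^ 2 / 2))
      (𝓝[>] 0) (𝓝 (γ * (gw - gz) - ⟪a - z, w - z⟫)) := by
    refine tendsto_nhdsWithin_of_tendsto_nhds ?_
    simpa using ((continuous_id.mul continuous_const).const_add _).tendsto (0 : ℝ)
  have := ge_of_tendsto hlim (by
    filter_upwards [Ioc_mem_nhdsGT one_pos] with t ht using hsegment t ht.1 ht.2)
  linarith

theorem IsProx.norm_sub_le (hγ : 0 < γ) (hg : ProperLscConvex g) (hprox : IsProx γ g a z)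
    (hprox' : IsProx γ g b z') : ‖z - z'‖ ≤ ‖a - b‖ := by
  obtain ⟨gz, hgz⟩ := hg.exists_eq_coe (hprox.ne_top hg)
  obtain ⟨gz', hgz'⟩ := hg.exists_eq_coe (hprox'.ne_top hg)
  have h₁ := hprox.inner_sub_le hγ hg hgz hgz'
  have h₂ := hprox'.inner_sub_le hγ hg hgz' hgz
  have hfirm : ‖z - z'‖ ^ 2 ≤ ⟪a - b, z - z'⟫ := by
    have hsum : ⟪a - z, z' - z⟫ + ⟪b - z', z - z'⟫ = ‖z - z'‖ ^ 2 - ⟪a - b, z - z'⟫ := by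
      rw [← real_inner_self_eq_norm_sq]
      simp only [inner_sub_left, inner_sub_right, real_inner_comm]
      ring
    linarith
  have hcs := real_inner_le_norm (a - b) (z - z')
  nlinarith [norm_nonneg (z - z'), norm_nonneg (a - b)]

theorem le_fconj (hz : g z = r) (u : EuclideanSpace ℝ (Fin p)) :
    ((⟪z, u⟫ - r : ℝ) : EReal) ≤ fconj g u := by
  rw [EReal.coe_sub, ← hz]
  exact le_iSup (fun x => ((⟪x, u⟫ : ℝ) : EReal) - g x) z

theorem IsProx.fconj_eq (hγ : 0 < γ) (hg : ProperLscConvex g) (hprox : IsProx γ g y z)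
    (hz : g z = r) : fconj g (γ⁻¹ • (y - z)) = ((⟪z, γ⁻¹ • (y - z)⟫ - r : ℝ) : EReal) := by
  refine le_antisymm (iSup_le fun w => ?_) (le_fconj hz _)
  rcases eq_or_ne (g w) ⊤ with hw | hw
  · simp [hw]
  obtain ⟨gw, hgw⟩ := hg.exists_eq_coe hw
  have hsub := hprox.inner_sub_le hγ hg hz hgw
  have hgap : γ⁻¹ * (⟪w, y - z⟫ - ⟪z, y - z⟫) ≤ gw - r := by
    rw [← inner_sub_left, real_inner_comm, inv_mul_le_iff₀ hγ]
    exact hsub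
  rw [hgw, ← EReal.coe_sub, EReal.coe_le_coe_iff, real_inner_smul_right, real_inner_smul_right]
  linarith [mul_sub γ⁻¹ ⟪w, y - z⟫ ⟪z, y - z⟫]

end Prox

theorem three_operator_splitting_identity {E : Type*} [NormedAddCommGroup E]
    [InnerProductSpace ℝ E] (γ : ℝ) (x y z x' u v : E) :
    2 * (⟪2 • z - y - γ • v - x, x - x'⟫ + γ * ⟪x - z, u⟫ - ⟪x' - z, y - z⟫)
        + ‖y + x - z - (x' + γ • u)‖ ^ 2
      = ‖y - (x' + γ • u)‖ ^ 2 - 2 * γ * ⟪v, x - x'⟫ - ‖x - z‖ ^ 2 := by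
  simp only [← real_inner_self_eq_norm_sq, two_smul, inner_add_left, inner_add_right,
    inner_sub_left, inner_sub_right, real_inner_smul_left, real_inner_smul_right]
  simp only [real_inner_comm]
  ring

section Step

variable {f : EuclideanSpace ℝ (Fin p) → ℝ}
  {gradf : EuclideanSpace ℝ (Fin p) → EuclideanSpace ℝ (Fin p)} {L : ℝ}
  {g h : EuclideanSpace ℝ (Fin p) → EReal} {γ : ℝ} {x y z v x' u : EuclideanSpace ℝ (Fin p)}

theorem three_operator_splitting_step (hfconv : ConvexOn ℝ Set.univ f)
    (hf : ∀ x, HasGradientAt f (gradf x) x) (hlip : ∀ a b, ‖gradf a - gradf b‖ ≤ L * ‖a - b‖)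
    (hg : ProperLscConvex g) (hh : ProperLscConvex h) (hγ : 0 < γ)
    (hz : IsProx γ h y z) (hx : IsProx γ g (2 • z - y - γ • v) x)
    (hx' : g x' ≠ ⊤) (hu : fconj h u ≠ ⊤) :
    ∃ Δ : ℝ, Lagr f g h x u - Lagr f g h x' (γ⁻¹ • (y - z)) = Δ ∧
      2 * γ * Δ + ‖y + x - z - (x' + γ • u)‖ ^ 2
        ≤ ‖y - (x' + γ • u)‖ ^ 2 + 2 * γ * ⟪gradf z - v, x - x'⟫
          + (γ * L - 1) * ‖x - z‖ ^ 2 := by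
  obtain ⟨gx, hgx⟩ := hg.exists_eq_coe (hx.ne_top hg)
  obtain ⟨gx', hgx'⟩ := hg.exists_eq_coe hx'
  obtain ⟨r, hhz⟩ := hh.exists_eq_coe (hz.ne_top hh)
  have hconj_ge := le_fconj hhz u
  obtain ⟨s, hs⟩ : ∃ s : ℝ, fconj h u = s :=
    ⟨(fconj h u).toReal, (EReal.coe_toReal hu (ne_bot_of_le_ne_bot (EReal.coe_ne_bot _)
      hconj_ge)).symm⟩
  rw [hs, EReal.coe_le_coe_iff] at hconj_ge
  set ut := γ⁻¹ • (y - z)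
  refine ⟨(f x + gx + ⟪x, u⟫ - s) - (f x' + gx' + ⟪x', ut⟫ - (⟪z, ut⟫ - r)), ?_, ?_⟩
  · rw [Lagr, Lagr, hgx, hgx', hs, hz.fconj_eq hγ hh hhz]
    norm_cast
  have hsmooth := hfconv.sub_le_inner_gradient_add_sq hf hlip x x' z
  have hprox : γ * (gx - gx') ≤ ⟪2 • z - y - γ • v - x, x - x'⟫ := by
    have := hx.inner_sub_le hγ hg hgx hgx'
    rw [← neg_sub x x', inner_neg_right] at this
    linarith
  have hdual : γ * (⟪x', ut⟫ - ⟪z, ut⟫) = ⟪x' - z, y - z⟫ := by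
    rw [← inner_sub_left, real_inner_smul_right, ← mul_assoc, mul_inv_cancel₀ hγ.ne', one_mul]
  have hid := three_operator_splitting_identity γ x y z x' u v
  nlinarith [mul_le_mul_of_nonneg_left hsmooth hγ.le, mul_le_mul_of_nonneg_left hconj_ge hγ.le,
    inner_sub_left (𝕜 := ℝ) x z u, inner_sub_left (𝕜 := ℝ) (gradf z) v (x - x')]

theorem three_operator_splitting_step_of_estimate (hfconv : ConvexOn ℝ Set.univ f)
    (hf : ∀ x, HasGradientAt f (gradf x) x) (hlip : ∀ a b, ‖gradf a - gradf b‖ ≤ L * ‖a - b‖)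
    (hg : ProperLscConvex g) (hh : ProperLscConvex h) (hγ : 0 < γ) (hγL : γ * L ≤ 1)
    (hz : IsProx γ h y z) (hx : IsProx γ g (2 • z - y - γ • v) x) {xbar : EuclideanSpace ℝ (Fin p)}
    (hxbar : IsProx γ g (2 • z - y - γ • gradf z) xbar) (hx' : g x' ≠ ⊤) (hu : fconj h u ≠ ⊤) :
    ∃ Δ : ℝ, Lagr f g h x u - Lagr f g h x' (γ⁻¹ • (y - z)) = Δ ∧
      2 * γ * Δ + ‖y + x - z - (x' + γ • u)‖ ^ 2
        ≤ ‖y - (x' + γ • u)‖ ^ 2 + 2 * γ ^ 2 * ‖gradf z - v‖ ^ 2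
          + 2 * γ * ⟪gradf z - v, xbar - x'⟫ := by
  obtain ⟨Δ, hΔ, hstep⟩ :=
    three_operator_splitting_step hfconv hf hlip hg hh hγ hz hx hx' hu
  refine ⟨Δ, hΔ, ?_⟩
  have hnonexp : ‖x - xbar‖ ≤ γ * ‖gradf z - v‖ := by
    simpa [show 2 • z - y - γ • v - (2 • z - y - γ • gradf z) = γ • (gradf z - v) by module,
      norm_smul, abs_of_pos hγ] using hx.norm_sub_le hγ hg hxbar
  have hsplit : ⟪gradf z - v, x - x'⟫ = ⟪gradf z - v, x - xbar⟫ + ⟪gradf z - v, xbar - x'⟫ := by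
    rw [← inner_add_right, sub_add_sub_cancel]
  have hcs := real_inner_le_norm (gradf z - v) (x - xbar)
  nlinarith [mul_le_mul_of_nonneg_left hnonexp (norm_nonneg (gradf z - v)),
    mul_nonneg (sub_nonneg.2 hγL) (sq_nonneg ‖x - z‖)]

end Step

theorem saddle_point_recursive_inequality_general
    {n : ℕ} (hn : 0 < n)
    (ψ : Fin n → EuclideanSpace ℝ (Fin p) → ℝ)
    (gradψ : Fin n → EuclideanSpace ℝ (Fin p) → EuclideanSpace ℝ (Fin p))
    (Lψ : ℝ)
    (hψconv : ∀ i, ConvexOn ℝ Set.univ (ψ i))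
    (hψdiff : ∀ i x, HasGradientAt (ψ i) (gradψ i x) x)
    (hψlip : ∀ i x y, ‖gradψ i x - gradψ i y‖ ≤ Lψ * ‖x - y‖)
    (ω : EuclideanSpace ℝ (Fin p) → ℝ)
    (gradω : EuclideanSpace ℝ (Fin p) → EuclideanSpace ℝ (Fin p))
    (Lω : ℝ)
    (hωconv : ConvexOn ℝ Set.univ ω)
    (hωdiff : ∀ x, HasGradientAt ω (gradω x) x)
    (hωlip : ∀ x y, ‖gradω x - gradω y‖ ≤ Lω * ‖x - y‖)
    (Lf : ℝ) (hLf : Lf = Lψ + Lω) (hLfpos : 0 < Lf)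
    -- summands `f_i = ψ_i + ω` and the full smooth term `f`
    (fj : Fin n → EuclideanSpace ℝ (Fin p) → ℝ)
    (hfj : ∀ j x, fj j x = ψ j x + ω x)
    (gradfj : Fin n → EuclideanSpace ℝ (Fin p) → EuclideanSpace ℝ (Fin p))
    (hgradfj : ∀ j x, gradfj j x = gradψ j x + gradω x)
    (f : EuclideanSpace ℝ (Fin p) → ℝ)
    (hf : ∀ x, f x = (n : ℝ)⁻¹ * ∑ j, ψ j x + ω x)
    (gradf : EuclideanSpace ℝ (Fin p) → EuclideanSpace ℝ (Fin p))
    (hgradf : ∀ x, gradf x = (n : ℝ)⁻¹ • ∑ j, gradψ j x + gradω x)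
    -- the nonsmooth terms with their proximal operators, and the qualification condition
    (g h : EuclideanSpace ℝ (Fin p) → EReal)
    (hg : ProperLscConvex g) (hh : ProperLscConvex h)
    (γ : ℝ) (hγpos : 0 < γ) (hγ : γ ≤ 1 / Lf)
    (proxg proxh : EuclideanSpace ℝ (Fin p) → EuclideanSpace ℝ (Fin p))
    (hproxg : ∀ x, IsProx γ g x (proxg x))
    (hproxh : ∀ x, IsProx γ h x (proxh x))
    (xstar : EuclideanSpace ℝ (Fin p))
    -- current state: `y_t`, `z_t = prox_{γh}(y_t)`, dual iterate `u_t = (y_t − z_t)/γ`,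
    -- stored gradients `α`, memory-Lyapunov values `m`, and `H_t`
    (y z : EuclideanSpace ℝ (Fin p)) (hz : z = proxh y)
    (ut : EuclideanSpace ℝ (Fin p)) (hut : ut = γ⁻¹ • (y - z))
    (α : Fin n → EuclideanSpace ℝ (Fin p)) (m : Fin n → ℝ)
    (hstruct : ∀ j, m j = 1 / (2 * Lf) * ‖α j - gradψ j xstar‖ ^ 2 ∨
      ∃ φ, α j = gradψ j φ ∧ m j = bregman (fj j) (gradfj j) φ xstar)
    (Ht : ℝ) (hHt : Ht = (n : ℝ)⁻¹ * ∑ j, m j)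
    -- the gradient estimator, prox step and next iterate (as functions of the sampled index i)
    (v : Fin n → EuclideanSpace ℝ (Fin p))
    (hv : ∀ i, v i = gradψ i z - α i + (n : ℝ)⁻¹ • ∑ j, α j + gradω z)
    (x : Fin n → EuclideanSpace ℝ (Fin p))
    (hx : ∀ i, x i = proxg (2 • z - y - γ • v i))
    (y' : Fin n → EuclideanSpace ℝ (Fin p))
    (hy' : ∀ i, y' i = y + x i - z) :
    ∀ xx uu : EuclideanSpace ℝ (Fin p), g xx ≠ ⊤ → fconj h uu ≠ ⊤ →
      ∀ η : ℝ, 0 < η →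
        (((2 * γ : ℝ)) : EReal)
            * ((((n : ℝ)⁻¹ : ℝ) : EReal) * ∑ i, (Lagr f g h (x i) uu - Lagr f g h xx ut))
          + (((n : ℝ)⁻¹ * ∑ i, ‖y' i - (xx + γ • uu)‖ ^ 2 : ℝ) : EReal)
        ≤ ((‖y - (xx + γ • uu)‖ ^ 2
            + 2 * γ ^ 2 * (1 + η) * ((n : ℝ)⁻¹ * ∑ i, ‖gradfj i z - gradfj i xstar‖ ^ 2)
            + 4 * γ ^ 2 * (1 + η⁻¹) * Lf * Ht : ℝ) : EReal) := by
  intro xx uu hgxx hhuu η hη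
  subst hLf
  have hf' : f = fun x => (n : ℝ)⁻¹ * ∑ j, ψ j x + ω x := funext hf
  have hfconv : ConvexOn ℝ Set.univ f := hf' ▸
    ((ConvexOn.fun_sum convex_univ univ fun j _ => hψconv j).smul (by positivity)).add hωconv
  have hfgrad : ∀ x, HasGradientAt f (gradf x) x := fun x => hf' ▸ hgradf x ▸
    ((HasGradientAt.sum univ fun j _ => hψdiff j x).const_mul _).add (hωdiff x)
  have hflip : ∀ a b, ‖gradf a - gradf b‖ ≤ (Lψ + Lω) * ‖a - b‖ := fun a b => by
    simpa only [hgradf] using norm_average_add_sub_le hn hψlip hωlip a b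
  have hγL : γ * (Lψ + Lω) ≤ 1 := by rwa [le_div_iff₀ hLfpos] at hγ
  choose Δ hΔ hstep using fun i => three_operator_splitting_step_of_estimate hfconv hfgrad hflip
    hg hh hγpos hγL (hz ▸ hproxh y) (hx i ▸ hproxg _) (hproxg _) hgxx hhuu
  have havg := inv_mul_sum_le_of_le_add_inner hn
    (sum_saga_error_eq_zero (fun j => gradψ j z) α (gradω z) hn) fun i => (hstep i).trans_eq
    (by rw [hgradf, hv, ← real_inner_smul_right])
  rw [sum_add_distrib, ← mul_sum, ← mul_sum] at havg
  have hvar := sum_norm_saga_error_sq_le (fun j => gradψ j z) (fun j => gradψ j xstar) α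
    (gradω z) (gradω xstar) hn hη
  have hmem : ∑ i, ‖gradψ i xstar - α i‖ ^ 2 ≤ 2 * (Lψ + Lω) * ∑ j, m j := by
    rw [mul_sum]
    exact sum_le_sum fun j _ => norm_gradient_sub_sq_le_of_memory (hψconv j) (hψdiff j)
      (hψlip j) hωconv hωdiff hωlip (hfj j) (hgradfj j) hLfpos (hstruct j)
  simp only [hut, hΔ, hy', hHt, ← EReal.coe_finset_sum, ← EReal.coe_mul, ← EReal.coe_add,
    EReal.coe_le_coe_iff, hgradfj]
  linear_combination havg + ((n : ℝ)⁻¹ * (2 * γ ^ 2)) * hvar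
    + ((n : ℝ)⁻¹ * (2 * γ ^ 2) * (1 + η⁻¹)) * hmem

/-- saddle point recursive inequality, dense VR-TOS. -/
theorem saddle_point_recursive_inequality
    {n : ℕ} (hn : 0 < n)
    (ψ : Fin n → EuclideanSpace ℝ (Fin p) → ℝ)
    (gradψ : Fin n → EuclideanSpace ℝ (Fin p) → EuclideanSpace ℝ (Fin p))
    (Lψ : ℝ)
    (hψconv : ∀ i, ConvexOn ℝ Set.univ (ψ i))
    (hψdiff : ∀ i x, HasGradientAt (ψ i) (gradψ i x) x)
    (hψlip : ∀ i x y, ‖gradψ i x - gradψ i y‖ ≤ Lψ * ‖x - y‖)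
    (ω : EuclideanSpace ℝ (Fin p) → ℝ)
    (gradω : EuclideanSpace ℝ (Fin p) → EuclideanSpace ℝ (Fin p))
    (Lω : ℝ)
    (hωconv : ConvexOn ℝ Set.univ ω)
    (hωdiff : ∀ x, HasGradientAt ω (gradω x) x)
    (hωlip : ∀ x y, ‖gradω x - gradω y‖ ≤ Lω * ‖x - y‖)
    (Lf : ℝ) (hLf : Lf = Lψ + Lω) (hLfpos : 0 < Lf)
    -- summands `f_i = ψ_i + ω` and the full smooth term `f`
    (fj : Fin n → EuclideanSpace ℝ (Fin p) → ℝ)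
    (hfj : ∀ j x, fj j x = ψ j x + ω x)
    (gradfj : Fin n → EuclideanSpace ℝ (Fin p) → EuclideanSpace ℝ (Fin p))
    (hgradfj : ∀ j x, gradfj j x = gradψ j x + gradω x)
    (f : EuclideanSpace ℝ (Fin p) → ℝ)
    (hf : ∀ x, f x = (n : ℝ)⁻¹ * ∑ j, ψ j x + ω x)
    (gradf : EuclideanSpace ℝ (Fin p) → EuclideanSpace ℝ (Fin p))
    (hgradf : ∀ x, gradf x = (n : ℝ)⁻¹ • ∑ j, gradψ j x + gradω x)
    -- the nonsmooth terms with their proximal operators, and the qualification condition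
    (g h : EuclideanSpace ℝ (Fin p) → EReal)
    (hg : ProperLscConvex g) (hh : ProperLscConvex h)
    (hqual : (intrinsicInterior ℝ {x | g x ≠ ⊤} ∩ intrinsicInterior ℝ {x | h x ≠ ⊤}).Nonempty)
    (γ : ℝ) (hγpos : 0 < γ) (hγ : γ ≤ 1 / Lf)
    (proxg proxh : EuclideanSpace ℝ (Fin p) → EuclideanSpace ℝ (Fin p))
    (hproxg : ∀ x, IsProx γ g x (proxg x))
    (hproxh : ∀ x, IsProx γ h x (proxh x))
    -- a minimizer `x*` of the primal objective
    (xstar : EuclideanSpace ℝ (Fin p))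
    (hxstar : ∀ x, ((f xstar : ℝ) : EReal) + g xstar + h xstar
        ≤ ((f x : ℝ) : EReal) + g x + h x)
    -- current state: `y_t`, `z_t = prox_{γh}(y_t)`, dual iterate `u_t = (y_t − z_t)/γ`,
    -- stored gradients `α`, memory-Lyapunov values `m`, and `H_t`
    (y z : EuclideanSpace ℝ (Fin p)) (hz : z = proxh y)
    (ut : EuclideanSpace ℝ (Fin p)) (hut : ut = γ⁻¹ • (y - z))
    (α : Fin n → EuclideanSpace ℝ (Fin p)) (m : Fin n → ℝ)
    (hstruct : ∀ j, m j = 1 / (2 * Lf) * ‖α j - gradψ j xstar‖ ^ 2 ∨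
      ∃ φ, α j = gradψ j φ ∧ m j = bregman (fj j) (gradfj j) φ xstar)
    (Ht : ℝ) (hHt : Ht = (n : ℝ)⁻¹ * ∑ j, m j)
    -- the gradient estimator, prox step and next iterate (as functions of the sampled index i)
    (v : Fin n → EuclideanSpace ℝ (Fin p))
    (hv : ∀ i, v i = gradψ i z - α i + (n : ℝ)⁻¹ • ∑ j, α j + gradω z)
    (x : Fin n → EuclideanSpace ℝ (Fin p))
    (hx : ∀ i, x i = proxg (2 • z - y - γ • v i))
    (y' : Fin n → EuclideanSpace ℝ (Fin p))
    (hy' : ∀ i, y' i = y + x i - z) :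
    ∀ xx uu : EuclideanSpace ℝ (Fin p), g xx ≠ ⊤ → fconj h uu ≠ ⊤ →
      ∀ η : ℝ, 0 < η →
        (((2 * γ : ℝ)) : EReal)
            * ((((n : ℝ)⁻¹ : ℝ) : EReal) * ∑ i, (Lagr f g h (x i) uu - Lagr f g h xx ut))
          + (((n : ℝ)⁻¹ * ∑ i, ‖y' i - (xx + γ • uu)‖ ^ 2 : ℝ) : EReal)
        ≤ ((‖y - (xx + γ • uu)‖ ^ 2
            + 2 * γ ^ 2 * (1 + η) * ((n : ℝ)⁻¹ * ∑ i, ‖gradfj i z - gradfj i xstar‖ ^ 2)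
            + 4 * γ ^ 2 * (1 + η⁻¹) * Lf * Ht : ℝ) : EReal) :=
  saddle_point_recursive_inequality_general hn ψ gradψ Lψ hψconv hψdiff hψlip ω gradω Lω hωconv
    hωdiff hωlip Lf hLf hLfpos fj hfj gradfj hgradfj f hf gradf hgradf g h hg hh γ hγpos hγ proxg
    proxh hproxg hproxh xstar y z hz ut hut α m hstruct Ht hHt v hv x hx y' hy'
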